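/- arXiv:1908.02674 — 3 statements merged into one kernel-verified Lean document; each statement's English description precedes it below -/
import Mathlib

section
/- Let H be a complex Hilbert space, (a_n) a bounded sequence in B(H) with mutually orthogonal ranges and cokernels in the sense that a_n a_m* = a_n* a_m = 0 for n ≠ m, and let v = ∑ a_n (strong operator limit). If B ⊆ B(H) is a C*-subalgebra consisting of compact operators containing each a_n, then for every b ∈ B, both v b and b v belong to the norm closure of B, provided each a_n b and b a_n lies in B. -/
/-!
Put `s N = ∑_{n<N} a n`. Since `s N → v` strongly, the `s N` are uniformly bounded
(Banach–Steinhaus), and a bounded strongly convergent sequence converges uniformly on compact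
sets; as `b` is compact, `s N * b → v * b` in norm, and `s N * b ∈ B`.

For `b * v`, pass to adjoints: `b * s N = (s N* * b*)*`, so it suffices that `s N* → v*`
strongly. Weakly this is automatic. Since `a k * (a n)* = 0` for `k ≠ n`, the vector `s N* ξ`
is orthogonal to `s M* ξ - s N* ξ` for `N ≤ M`, hence to `v* ξ - s N* ξ`, so
`‖v* ξ - s N* ξ‖² = re ⟪v* ξ, v* ξ - s N* ξ⟫ → 0`.
-/

open Filter Topology

section CompactOperator

variable {𝕜 E F G : Type*} [NontriviallyNormedField 𝕜] [NormedAddCommGroup E] [NormedSpace 𝕜 E]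
  [NormedAddCommGroup F] [NormedSpace 𝕜 F] [NormedAddCommGroup G] [NormedSpace 𝕜 G]
  {ι : Type*} {l : Filter ι}

theorem ContinuousLinearMap.exists_norm_le_of_tendsto [CompleteSpace F] {T : ℕ → F →L[𝕜] G}
    {T₀ : F →L[𝕜] G} (hT : ∀ y, Tendsto (fun n => T n y) atTop (𝓝 (T₀ y))) :
    ∃ C, ∀ n, ‖T n‖ ≤ C :=
  banach_steinhaus fun y =>
    let ⟨C, hC⟩ := (hT y).norm.bddAbove_range
    ⟨C, fun n => hC ⟨n, rfl⟩⟩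

theorem ContinuousLinearMap.tendstoUniformlyOn_of_tendsto_of_norm_le {T : ι → F →L[𝕜] G}
    {T₀ : F →L[𝕜] G} (hT : ∀ y, Tendsto (fun i => T i y) l (𝓝 (T₀ y))) {C : ℝ}
    (hC : ∀ i, ‖T i‖ ≤ C) {S : Set F} (hS : IsCompact S) :
    TendstoUniformlyOn (fun i => ⇑(T i)) T₀ l S := by
  have : CompactSpace S := isCompact_iff_compactSpace.mp hS
  have hequi : Equicontinuous (fun i => ⇑(T i)) :=
    ((NormedSpace.equicontinuous_TFAE T).out 5 1 : (∃ C, ∀ i, ‖T i‖ ≤ C) ↔ _).mp ⟨C, hC⟩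
  rw [tendstoUniformlyOn_iff_tendstoUniformly_comp_coe]
  exact UniformFun.tendsto_iff_tendstoUniformly.mp <|
    (((equicontinuous_restrict_iff _).mpr (hequi.equicontinuousOn S)).tendsto_uniformFun_iff_pi l
      (S.domRestrict T₀)).mpr (tendsto_pi_nhds.mpr fun y => hT y)

theorem IsCompactOperator.tendsto_comp_of_tendsto_of_norm_le [NormedAlgebra ℝ 𝕜]
    {T : ι → F →L[𝕜] G} {T₀ : F →L[𝕜] G} (hT : ∀ y, Tendsto (fun i => T i y) l (𝓝 (T₀ y)))
    {C : ℝ} (hC : ∀ i, ‖T i‖ ≤ C) {K : E →L[𝕜] F} (hK : IsCompactOperator K) :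
    Tendsto (fun i => T i ∘L K) l (𝓝 (T₀ ∘L K)) := by
  have hunif := ContinuousLinearMap.tendstoUniformlyOn_of_tendsto_of_norm_le hT hC
    (hK.isCompact_closure_image_closedBall (f := (K : E →ₗ[𝕜] F)) 1)
  rw [Metric.tendsto_nhds]
  intro ε hε
  filter_upwards [Metric.tendstoUniformlyOn_iff.mp hunif (ε / 2) (half_pos hε)] with i hi
  rw [dist_eq_norm]
  refine lt_of_le_of_lt (ContinuousLinearMap.opNorm_le_of_unit_norm (half_pos hε).le
    fun x hx => ?_) (half_lt_self hε)
  have hKx : K x ∈ closure (K '' Metric.closedBall 0 1) :=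
    subset_closure ⟨x, by simp [hx], rfl⟩
  simpa [dist_eq_norm, norm_sub_rev] using (hi (K x) hKx).le

end CompactOperator

section Hilbert

variable {𝕜 E : Type*} [RCLike 𝕜] [NormedAddCommGroup E] [InnerProductSpace 𝕜 E]

local notation "⟪" x ", " y "⟫" => inner 𝕜 x y

theorem tendsto_of_tendsto_inner_of_eventually_inner_eq {ι : Type*} {l : Filter ι} [l.NeBot]
    {w : ι → E} {u : E} (hweak : ∀ η, Tendsto (fun i => ⟪η, w i⟫) l (𝓝 ⟪η, u⟫))
    (horth : ∀ i, ∀ᶠ j in l, ⟪w i, w j⟫ = ⟪w i, w i⟫) :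
    Tendsto w l (𝓝 u) := by
  have hu : ∀ i, ⟪u - w i, w i⟫ = 0 := fun i => by
    have h := tendsto_nhds_unique (hweak (w i))
      (tendsto_const_nhds.congr' (EventuallyEq.symm (horth i)))
    rw [inner_sub_left, ← inner_conj_symm, h, inner_conj_symm, sub_self]
  have hsq : ∀ i, ‖w i - u‖ ^ 2 = RCLike.re ⟪u, u - w i⟫ := fun i => by
    rw [norm_sub_rev, ← inner_self_eq_norm_sq (𝕜 := 𝕜), inner_re_symm u,
      inner_sub_right (u - w i), hu, sub_zero]
  have hlim : Tendsto (fun i => RCLike.re ⟪u, u - w i⟫) l (𝓝 0) := by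
    have := (RCLike.continuous_re.tendsto _).comp ((hweak u).const_sub ⟪u, u⟫)
    simpa [Function.comp_def, inner_sub_right] using this
  rw [tendsto_iff_norm_sub_tendsto_zero]
  simpa [Function.comp_def, ← hsq] using (Real.continuous_sqrt.tendsto 0).comp hlim

theorem tendsto_sum_star_apply_of_mul_star_eq_zero [CompleteSpace E] {a : ℕ → E →L[𝕜] E}
    (horth : ∀ n m, n ≠ m → a n * star (a m) = 0) {v : E →L[𝕜] E}
    (hv : ∀ ξ, Tendsto (fun N => ∑ n ∈ Finset.range N, a n ξ) atTop (𝓝 (v ξ))) (ξ : E) :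
    Tendsto (fun N => ∑ n ∈ Finset.range N, star (a n) ξ) atTop (𝓝 (star v ξ)) := by
  refine tendsto_of_tendsto_inner_of_eventually_inner_eq (𝕜 := 𝕜) (fun η => ?_) fun N => ?_
  · simp only [inner_sum, ContinuousLinearMap.star_eq_adjoint,
      ContinuousLinearMap.adjoint_inner_right, ← sum_inner]
    exact (hv η).inner tendsto_const_nhds
  · filter_upwards [eventually_ge_atTop N] with M hNM
    have hcross :
        ⟪(∑ k ∈ Finset.range N, star (a k) ξ), ∑ n ∈ Finset.Ico N M, star (a n) ξ⟫ = 0 := by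
      simp only [sum_inner, inner_sum, ContinuousLinearMap.star_eq_adjoint,
        ContinuousLinearMap.adjoint_inner_left]
      refine Finset.sum_eq_zero fun n hn => Finset.sum_eq_zero fun k hk => ?_
      have hkn : k ≠ n := ((Finset.mem_range.mp hk).trans_le (Finset.mem_Ico.mp hn).1).ne
      simpa [ContinuousLinearMap.star_eq_adjoint] using
        congrArg (fun T : E →L[𝕜] E => ⟪ξ, T ξ⟫) (horth k n hkn)
    rw [← Finset.sum_range_add_sum_Ico _ hNM, inner_add_right, hcross, add_zero]

end Hilbert

theorem stmt2_general {H : Type*} [NormedAddCommGroup H] [InnerProductSpace ℂ H] [CompleteSpace H]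
    (a : ℕ → H →L[ℂ] H)
    (horth : ∀ n m, n ≠ m → a n * star (a m) = 0 ∧ star (a n) * a m = 0)
    (v : H →L[ℂ] H)
    (hv : ∀ ξ : H, Tendsto (fun N => ∑ n ∈ Finset.range N, a n ξ) atTop (𝓝 (v ξ)))
    (B : NonUnitalStarSubalgebra ℂ (H →L[ℂ] H))
    (hBcpt : ∀ b ∈ B, IsCompactOperator b)
    (b : H →L[ℂ] H) (hb : b ∈ B)
    (hab : ∀ n, a n * b ∈ B ∧ b * a n ∈ B) :
    v * b ∈ closure (B : Set (H →L[ℂ] H)) ∧ b * v ∈ closure (B : Set (H →L[ℂ] H)) := by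
  set s : ℕ → H →L[ℂ] H := fun N => ∑ n ∈ Finset.range N, a n
  have hs : ∀ ξ, Tendsto (fun N => s N ξ) atTop (𝓝 (v ξ)) := by
    simpa [s, sum_apply] using hv
  have hs_star : ∀ ξ, Tendsto (fun N => star (s N) ξ) atTop (𝓝 (star v ξ)) := by
    simpa [s, star_sum, sum_apply] using
      tendsto_sum_star_apply_of_mul_star_eq_zero (fun n m h => (horth n m h).1) hv
  obtain ⟨C, hC⟩ := ContinuousLinearMap.exists_norm_le_of_tendsto hs
  constructor
  · refine mem_closure_of_tendsto ((hBcpt b hb).tendsto_comp_of_tendsto_of_norm_le hs hC)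
      (Eventually.of_forall fun N => ?_)
    show s N * b ∈ B
    simpa [s, Finset.sum_mul] using sum_mem fun n _ => (hab n).1
  · have hlim := (continuous_star.tendsto _).comp <|
      (hBcpt _ (star_mem hb)).tendsto_comp_of_tendsto_of_norm_le hs_star
        fun N => (norm_star (s N)).trans_le (hC N)
    have hbs : Tendsto (fun N => b * s N) atTop (𝓝 (b * v)) := by
      simpa [Function.comp_def, ← ContinuousLinearMap.mul_def, star_mul] using hlim
    refine mem_closure_of_tendsto hbs (Eventually.of_forall fun N => ?_)
    simpa [s, Finset.mul_sum] using sum_mem fun n _ => (hab n).2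

/-- Let `(a n)` be a bounded sequence in `B(H)` with
`a n * (a m)* = (a n)* * a m = 0` for `n ≠ m`, and let `v` be the strong operator limit of
`∑ a n`.  If `B ⊆ B(H)` is a C*-subalgebra consisting of compact operators which contains
each `a n`, then for every `b ∈ B` with `a n * b ∈ B` and `b * a n ∈ B` for all `n`, both
`v * b` and `b * v` lie in the norm closure of `B`. -/
theorem stmt2 {H : Type*} [NormedAddCommGroup H] [InnerProductSpace ℂ H] [CompleteSpace H]
    (a : ℕ → H →L[ℂ] H) (C : ℝ) (hbdd : ∀ n, ‖a n‖ ≤ C)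
    (horth : ∀ n m, n ≠ m → a n * star (a m) = 0 ∧ star (a n) * a m = 0)
    (v : H →L[ℂ] H)
    (hv : ∀ ξ : H, Tendsto (fun N => ∑ n ∈ Finset.range N, a n ξ) atTop (𝓝 (v ξ)))
    (B : NonUnitalStarSubalgebra ℂ (H →L[ℂ] H)) (hBclosed : IsClosed (B : Set (H →L[ℂ] H)))
    (hBcpt : ∀ b ∈ B, IsCompactOperator b)
    (ha : ∀ n, a n ∈ B)
    (b : H →L[ℂ] H) (hb : b ∈ B)
    (hab : ∀ n, a n * b ∈ B ∧ b * a n ∈ B) :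
    v * b ∈ closure (B : Set (H →L[ℂ] H)) ∧ b * v ∈ closure (B : Set (H →L[ℂ] H)) :=
  stmt2_general a horth v hv B hBcpt b hb hab
end

section
/- Let B be a C*-algebra, M a right Hilbert B-module with finite orthonormal basis (ξ_i)_{i=1}^n and N a right Hilbert B-module with finite orthonormal basis (η_j)_{j=1}^m. Let A be a C*-algebra and Φ : B ⊗ B → A a *-homomorphism (minimal tensor product). Then the elements ζ_{ij} := (ξ_i ⊠ η_j) ⊗ Φ(⟨ξ_i,ξ_i⟩ ⊗ ⟨η_j,η_j⟩) form a finite orthonormal basis for the interior tensor product (M ⊠ N) ⊗_Φ A. -/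
/-!
Orthogonality and the projection property are read off the inner-product formula for simple
tensors, because `⟪ξ i, ξ i⟫` and `⟪η j, η j⟫` are projections absorbed by `ξ i` and `η j` and `Φ`
is multiplicative and star-preserving. For the expansion, Parseval's identity
`∑ ⟪s, ζ⟫ ⟪ζ, t⟫ = ⟪s, t⟫` for simple tensors `s`, `t` reduces, by biadditivity and
multiplicativity of `Φ`, to Parseval's identity in `M` and in `N`. By Cauchy–Schwarz an element
orthogonal to the dense span of the simple tensors vanishes; this gives the expansion first of
the simple tensors and then, using it, of every element.
-/

open scoped InnerProductSpace RightActions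

/-- The class `CStarModule` as it stood in Mathlib of December 2024: a *right* Hilbert
C⋆-module (action `SMul Aᵐᵒᵖ E`, inner product `A`-linear on the right). -/
class OldCStarModule (A : outParam <| Type*) (E : Type*) [NonUnitalSemiring A] [StarRing A]
    [Module ℂ A] [AddCommGroup E] [Module ℂ E] [PartialOrder A] [SMul Aᵐᵒᵖ E] [Norm A] [Norm E]
    extends Inner A E where
  inner_add_right {x} {y} {z} : inner x (y + z) = inner x y + inner x z
  inner_self_nonneg {x} : 0 ≤ inner x x
  inner_self {x} : inner x x = 0 ↔ x = 0
  inner_op_smul_right {a : A} {x y : E} : inner x (y <• a) = inner x y * a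
  inner_smul_right_complex {z : ℂ} {x} {y} : inner x (z • y) = z • inner x y
  star_inner x y : star (inner x y) = inner y x
  norm_eq_sqrt_norm_inner_self x : ‖x‖ = √‖inner x x‖

namespace OldCStarModule

section Basic

variable {A E : Type*} [NonUnitalCStarAlgebra A] [PartialOrder A] [NormedAddCommGroup E]
  [Module ℂ E] [SMul Aᵐᵒᵖ E] [OldCStarModule A E]

lemma inner_add_left {x y z : E} : ⟪x + y, z⟫_A = ⟪x, z⟫_A + ⟪y, z⟫_A := by
  rw [← star_inner, inner_add_right, star_add, star_inner, star_inner]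

lemma inner_op_smul_left {a : A} {x y : E} : ⟪x <• a, y⟫_A = star a * ⟪x, y⟫_A := by
  rw [← star_inner, inner_op_smul_right, star_mul, star_inner]

lemma inner_smul_left_complex {z : ℂ} {x y : E} : ⟪z • x, y⟫_A = star z • ⟪x, y⟫_A := by
  rw [← star_inner, inner_smul_right_complex, star_smul, star_inner]

lemma inner_smul_left_real {z : ℝ} {x y : E} : ⟪z • x, y⟫_A = z • ⟪x, y⟫_A := by
  rw [← Complex.coe_smul, inner_smul_left_complex, Complex.star_def, Complex.conj_ofReal,
    Complex.coe_smul]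

lemma inner_smul_right_real {z : ℝ} {x y : E} : ⟪x, z • y⟫_A = z • ⟪x, y⟫_A := by
  rw [← Complex.coe_smul, inner_smul_right_complex, Complex.coe_smul]

@[simp] lemma inner_zero_right {x : E} : ⟪x, 0⟫_A = 0 := by
  rw [← zero_smul ℂ (0 : E), inner_smul_right_complex, zero_smul]

@[simp] lemma inner_zero_left {x : E} : ⟪0, x⟫_A = 0 := by
  rw [← star_inner, inner_zero_right, star_zero]

lemma inner_sub_right {x y z : E} : ⟪x, y - z⟫_A = ⟪x, y⟫_A - ⟪x, z⟫_A := by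
  rw [sub_eq_add_neg, inner_add_right, ← neg_one_smul ℂ z, inner_smul_right_complex,
    neg_one_smul, ← sub_eq_add_neg]

lemma inner_sub_left {x y z : E} : ⟪x - y, z⟫_A = ⟪x, z⟫_A - ⟪y, z⟫_A := by
  rw [← star_inner, inner_sub_right, star_sub, star_inner, star_inner]

lemma inner_sum_right {ι : Type*} {s : Finset ι} {x : E} {y : ι → E} :
    ⟪x, ∑ i ∈ s, y i⟫_A = ∑ i ∈ s, ⟪x, y i⟫_A :=
  map_sum (AddMonoidHom.mk' (fun y => ⟪x, y⟫_A) fun _ _ => inner_add_right) y s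

lemma inner_sum_left {ι : Type*} {s : Finset ι} {x : ι → E} {y : E} :
    ⟪∑ i ∈ s, x i, y⟫_A = ∑ i ∈ s, ⟪x i, y⟫_A :=
  map_sum (AddMonoidHom.mk' (fun x => ⟪x, y⟫_A) fun _ _ => inner_add_left) x s

lemma isSelfAdjoint_inner_self {x : E} : IsSelfAdjoint ⟪x, x⟫_A := star_inner x x

lemma op_smul_zero (x : E) : x <• (0 : A) = 0 := by
  rw [← inner_self (A := A), inner_op_smul_right, mul_zero]

lemma inner_sum_op_smul_inner_right {ι : Type*} (s : Finset ι) (ζ : ι → E) (x y : E) :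
    ⟪x, ∑ i ∈ s, ζ i <• ⟪ζ i, y⟫_A⟫_A = ∑ i ∈ s, ⟪x, ζ i⟫_A * ⟪ζ i, y⟫_A := by
  simp only [inner_sum_right, inner_op_smul_right]

lemma inner_sum_op_smul_inner_left {ι : Type*} (s : Finset ι) (ζ : ι → E) (x y : E) :
    ⟪∑ i ∈ s, ζ i <• ⟪ζ i, x⟫_A, y⟫_A = ∑ i ∈ s, ⟪x, ζ i⟫_A * ⟪ζ i, y⟫_A := by
  simp only [inner_sum_left, inner_op_smul_left, star_inner]

lemma sum_inner_mul_inner_eq_inner {ι : Type*} {s : Finset ι} {ζ : ι → E} {x : E}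
    (hx : x = ∑ i ∈ s, ζ i <• ⟪ζ i, x⟫_A) (y : E) :
    ∑ i ∈ s, ⟪x, ζ i⟫_A * ⟪ζ i, y⟫_A = ⟪x, y⟫_A := by
  conv_rhs => rw [hx]
  exact (inner_sum_op_smul_inner_left s ζ x y).symm

end Basic

section CauchySchwarz

variable {A E : Type*} [NonUnitalCStarAlgebra A] [PartialOrder A] [StarOrderedRing A]
  [NormedAddCommGroup E] [Module ℂ E] [SMul Aᵐᵒᵖ E] [OldCStarModule A E]

lemma star_mul_inner_self_mul_le (x : E) (a : A) :
    star a * ⟪x, x⟫_A * a ≤ ‖x‖ ^ 2 • (star a * a) := by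
  calc star a * ⟪x, x⟫_A * a ≤ ‖⟪x, x⟫_A‖ • (star a * a) :=
        CStarAlgebra.star_left_conjugate_le_norm_smul (hb := isSelfAdjoint_inner_self)
    _ = ‖x‖ ^ 2 • (star a * a) := by
        rw [norm_eq_sqrt_norm_inner_self (A := A) x, Real.sq_sqrt (norm_nonneg _)]

lemma inner_mul_inner_swap_le (x y : E) : ⟪y, x⟫_A * ⟪x, y⟫_A ≤ ‖x‖ ^ 2 • ⟪y, y⟫_A := by
  rcases eq_or_ne x 0 with rfl | hx
  · simp
  have hpos : 0 < ‖x‖ ^ 2 := by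
    rw [norm_eq_sqrt_norm_inner_self (A := A) x, Real.sq_sqrt (norm_nonneg _), norm_pos_iff]
    exact fun h => hx (inner_self.mp h)
  set a := ⟪x, y⟫_A
  set r := ‖x‖ ^ 2
  have key : 0 ≤ r • (star a * a) - r • (star a * a) - r • (star a * a) + r • (r • ⟪y, y⟫_A) :=
    calc 0 ≤ ⟪x <• a - r • y, x <• a - r • y⟫_A := inner_self_nonneg
      _ = star a * ⟪x, x⟫_A * a - r • (star a * a) - r • (star a * a) + r • (r • ⟪y, y⟫_A) := by
        simp only [inner_sub_right, inner_op_smul_right, inner_sub_left, inner_op_smul_left,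
          inner_smul_left_real, inner_smul_right_real, star_inner, a, sub_mul, smul_mul_assoc,
          smul_sub, mul_assoc]
        abel
      _ ≤ _ := by gcongr; exact star_mul_inner_self_mul_le x a
  rw [sub_self, zero_sub, le_neg_add_iff_add_le, add_zero, smul_le_smul_iff_of_pos_left hpos,
    star_inner] at key
  exact key

lemma norm_inner_le (x y : E) : ‖⟪x, y⟫_A‖ ≤ ‖x‖ * ‖y‖ := by
  refine le_of_sq_le_sq ?_ (by positivity)
  calc ‖⟪x, y⟫_A‖ ^ 2 = ‖⟪y, x⟫_A * ⟪x, y⟫_A‖ := by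
        rw [← star_inner x, CStarRing.norm_star_mul_self, pow_two]
    _ ≤ ‖‖x‖ ^ 2 • ⟪y, y⟫_A‖ := by
        refine CStarAlgebra.norm_le_norm_of_nonneg_of_le ?_ (inner_mul_inner_swap_le x y)
        rw [← star_inner x]
        exact star_mul_self_nonneg _
    _ = (‖x‖ * ‖y‖) ^ 2 := by
        rw [norm_smul, norm_eq_sqrt_norm_inner_self (A := A) y, mul_pow,
          Real.sq_sqrt (norm_nonneg _), Real.norm_of_nonneg (by positivity)]

lemma continuous_inner_left (y : E) : Continuous fun x : E => ⟪x, y⟫_A :=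
  LipschitzWith.continuous (K := ‖y‖₊) <| LipschitzWith.of_dist_le_mul fun x x' => by
    rw [dist_eq_norm, dist_eq_norm, ← inner_sub_left, coe_nnnorm, mul_comm]
    exact norm_inner_le _ _

lemma eq_zero_of_forall_inner_eq_zero {S : Set E} (hS : Dense (Submodule.span ℂ S : Set E))
    {y : E} (hy : ∀ s ∈ S, ⟪s, y⟫_A = 0) : y = 0 := by
  have hspan : ∀ s ∈ Submodule.span ℂ S, ⟪s, y⟫_A = 0 := by
    intro s hs
    induction hs using Submodule.span_induction with
    | mem s hs => exact hy s hs
    | zero => exact inner_zero_left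
    | add s s' _ _ h h' => rw [inner_add_left, h, h', add_zero]
    | smul c s _ h => rw [inner_smul_left_complex, h, smul_zero]
  have hclosed : IsClosed {s : E | ⟪s, y⟫_A = 0} :=
    isClosed_eq (continuous_inner_left y) continuous_const
  exact inner_self.mp (hclosed.closure_subset_iff.mpr hspan (hS y))

lemma eq_sum_op_smul_inner_of_dense {ι : Type*} [Fintype ι] {S : Set E}
    (hS : Dense (Submodule.span ℂ S : Set E)) (ζ : ι → E)
    (hζ : ∀ s ∈ S, ∀ t ∈ S, ∑ i, ⟪s, ζ i⟫_A * ⟪ζ i, t⟫_A = ⟪s, t⟫_A) (x : E) :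
    x = ∑ i, ζ i <• ⟪ζ i, x⟫_A := by
  have expand (x : E) (hx : ∀ s ∈ S, ∑ i, ⟪s, ζ i⟫_A * ⟪ζ i, x⟫_A = ⟪s, x⟫_A) :
      x = ∑ i, ζ i <• ⟪ζ i, x⟫_A :=
    sub_eq_zero.mp <| eq_zero_of_forall_inner_eq_zero hS fun s hs => by
      rw [inner_sub_right, inner_sum_op_smul_inner_right, hx s hs, sub_self]
  exact expand x fun s hs => sum_inner_mul_inner_eq_inner (expand s fun s' hs' => hζ s' hs' s hs) x

end CauchySchwarz

section OrthonormalBasis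

variable {A E : Type*} [NonUnitalCStarAlgebra A] [PartialOrder A] [NormedAddCommGroup E]
  [Module ℂ E] [SMul Aᵐᵒᵖ E] [OldCStarModule A E] {ι : Type*} [Fintype ι]

structure IsOrthonormalBasis (ξ : ι → E) : Prop where
  inner_eq_zero : Pairwise fun i i' => ⟪ξ i, ξ i'⟫_A = 0
  isIdempotentElem_inner_self : ∀ i, IsIdempotentElem ⟪ξ i, ξ i⟫_A
  eq_sum_op_smul_inner : ∀ x, x = ∑ i, ξ i <• ⟪ξ i, x⟫_A

namespace IsOrthonormalBasis

variable {ξ : ι → E}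

lemma op_smul_inner_self (hξ : IsOrthonormalBasis ξ) (i : ι) :
    ξ i <• ⟪ξ i, ξ i⟫_A = ξ i := by
  conv_rhs => rw [hξ.eq_sum_op_smul_inner (ξ i)]
  rw [Finset.sum_eq_single_of_mem i (Finset.mem_univ i) fun i' _ hi' => by
    rw [hξ.inner_eq_zero hi', op_smul_zero]]

lemma inner_mul_inner_self (hξ : IsOrthonormalBasis ξ) (i : ι) (x : E) :
    ⟪x, ξ i⟫_A * ⟪ξ i, ξ i⟫_A = ⟪x, ξ i⟫_A := by
  rw [← inner_op_smul_right, hξ.op_smul_inner_self]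

lemma star_inner_self_mul_inner (hξ : IsOrthonormalBasis ξ) (i : ι) (x : E) :
    star ⟪ξ i, ξ i⟫_A * ⟪ξ i, x⟫_A = ⟪ξ i, x⟫_A := by
  rw [← inner_op_smul_left, hξ.op_smul_inner_self]

lemma sum_inner_mul_inner (hξ : IsOrthonormalBasis ξ) (x y : E) :
    ∑ i, ⟪x, ξ i⟫_A * ⟪ξ i, y⟫_A = ⟪x, y⟫_A :=
  sum_inner_mul_inner_eq_inner (hξ.eq_sum_op_smul_inner x) y

end IsOrthonormalBasis

end OrthonormalBasis

section TensorBasis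

variable {B : Type*} [NonUnitalCStarAlgebra B] [PartialOrder B]
  {A : Type*} [NonUnitalCStarAlgebra A] [PartialOrder A]
  {M : Type*} [NormedAddCommGroup M] [Module ℂ M] [SMul Bᵐᵒᵖ M] [OldCStarModule B M]
  {N : Type*} [NormedAddCommGroup N] [Module ℂ N] [SMul Bᵐᵒᵖ N] [OldCStarModule B N]
  {T : Type*} [NormedAddCommGroup T] [Module ℂ T] [SMul Aᵐᵒᵖ T] [OldCStarModule A T]
  {ι κ : Type*} [Fintype ι] [Fintype κ]

/-- The paper's `ζ i j = (ξ i ⊠ η j) ⊗ Φ (⟪ξ i, ξ i⟫ ⊗ ⟪η j, η j⟫)`, where `Φ a b` stands for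
`Φ (a ⊗ b)` and `tmul x y a` for the simple tensor `(x ⊠ y) ⊗ a` of `(M ⊠ N) ⊗_Φ A`. -/
def tensorBasis (Φ : B →+ B →+ A) (tmul : M → N → A → T) (ξ : ι → M) (η : κ → N)
    (i : ι) (j : κ) : T :=
  tmul (ξ i) (η j) (Φ ⟪ξ i, ξ i⟫_B ⟪η j, η j⟫_B)

variable {Φ : B →+ B →+ A} {tmul : M → N → A → T} {ξ : ι → M} {η : κ → N}

lemma inner_tmul_tensorBasis (hξ : IsOrthonormalBasis ξ) (hη : IsOrthonormalBasis η)
    (hΦmul : ∀ a a' b b', Φ (a * a') (b * b') = Φ a b * Φ a' b')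
    (htmul : ∀ x y a x' y' a', ⟪tmul x y a, tmul x' y' a'⟫_A = star a * Φ ⟪x, x'⟫_B ⟪y, y'⟫_B * a')
    (x : M) (y : N) (a : A) (i : ι) (j : κ) :
    ⟪tmul x y a, tensorBasis Φ tmul ξ η i j⟫_A = star a * Φ ⟪x, ξ i⟫_B ⟪y, η j⟫_B := by
  rw [tensorBasis, htmul, mul_assoc, ← hΦmul, hξ.inner_mul_inner_self, hη.inner_mul_inner_self]

lemma inner_tensorBasis_tmul (hξ : IsOrthonormalBasis ξ) (hη : IsOrthonormalBasis η)
    (hΦmul : ∀ a a' b b', Φ (a * a') (b * b') = Φ a b * Φ a' b')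
    (hΦstar : ∀ a b, Φ (star a) (star b) = star (Φ a b))
    (htmul : ∀ x y a x' y' a', ⟪tmul x y a, tmul x' y' a'⟫_A = star a * Φ ⟪x, x'⟫_B ⟪y, y'⟫_B * a')
    (i : ι) (j : κ) (x : M) (y : N) (a : A) :
    ⟪tensorBasis Φ tmul ξ η i j, tmul x y a⟫_A = Φ ⟪ξ i, x⟫_B ⟪η j, y⟫_B * a := by
  rw [tensorBasis, htmul, ← hΦstar, ← hΦmul, hξ.star_inner_self_mul_inner,
    hη.star_inner_self_mul_inner]

lemma sum_inner_tmul_tensorBasis_mul (hξ : IsOrthonormalBasis ξ) (hη : IsOrthonormalBasis η)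
    (hΦmul : ∀ a a' b b', Φ (a * a') (b * b') = Φ a b * Φ a' b')
    (hΦstar : ∀ a b, Φ (star a) (star b) = star (Φ a b))
    (htmul : ∀ x y a x' y' a', ⟪tmul x y a, tmul x' y' a'⟫_A = star a * Φ ⟪x, x'⟫_B ⟪y, y'⟫_B * a')
    (x : M) (y : N) (a : A) (x' : M) (y' : N) (a' : A) :
    ∑ p : ι × κ, ⟪tmul x y a, tensorBasis Φ tmul ξ η p.1 p.2⟫_A *
      ⟪tensorBasis Φ tmul ξ η p.1 p.2, tmul x' y' a'⟫_A = ⟪tmul x y a, tmul x' y' a'⟫_A := by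
  simp only [inner_tmul_tensorBasis hξ hη hΦmul htmul,
    inner_tensorBasis_tmul hξ hη hΦmul hΦstar htmul]
  rw [htmul, ← hξ.sum_inner_mul_inner, ← hη.sum_inner_mul_inner]
  simp only [map_sum, AddMonoidHom.finsetSum_apply, Finset.mul_sum, Finset.sum_mul, hΦmul,
    Fintype.sum_prod_type, mul_assoc]
  exact Finset.sum_comm

lemma inner_tensorBasis_self (hξ : IsOrthonormalBasis ξ) (hη : IsOrthonormalBasis η)
    (hΦmul : ∀ a a' b b', Φ (a * a') (b * b') = Φ a b * Φ a' b')
    (hΦstar : ∀ a b, Φ (star a) (star b) = star (Φ a b))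
    (htmul : ∀ x y a x' y' a', ⟪tmul x y a, tmul x' y' a'⟫_A = star a * Φ ⟪x, x'⟫_B ⟪y, y'⟫_B * a')
    (i : ι) (j : κ) :
    ⟪tensorBasis Φ tmul ξ η i j, tensorBasis Φ tmul ξ η i j⟫_A = Φ ⟪ξ i, ξ i⟫_B ⟪η j, η j⟫_B :=
  (inner_tensorBasis_tmul hξ hη hΦmul hΦstar htmul i j _ _ _).trans <| by
    rw [← hΦmul, (hξ.isIdempotentElem_inner_self i).eq, (hη.isIdempotentElem_inner_self j).eq]

theorem IsOrthonormalBasis.tensorBasis [StarOrderedRing A]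
    (hξ : IsOrthonormalBasis ξ) (hη : IsOrthonormalBasis η)
    (hΦmul : ∀ a a' b b', Φ (a * a') (b * b') = Φ a b * Φ a' b')
    (hΦstar : ∀ a b, Φ (star a) (star b) = star (Φ a b))
    (htmul : ∀ x y a x' y' a', ⟪tmul x y a, tmul x' y' a'⟫_A = star a * Φ ⟪x, x'⟫_B ⟪y, y'⟫_B * a')
    (hdense : Dense (Submodule.span ℂ (Set.range fun p : M × N × A => tmul p.1 p.2.1 p.2.2) :
      Set T)) :
    IsOrthonormalBasis fun p : ι × κ => tensorBasis Φ tmul ξ η p.1 p.2 where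
  inner_eq_zero := by
    rintro ⟨i, j⟩ ⟨i', j'⟩ hne
    simp only [OldCStarModule.tensorBasis, htmul]
    rcases eq_or_ne i i' with rfl | hi
    · have hj : j ≠ j' := fun hj => hne (hj ▸ rfl)
      rw [hη.inner_eq_zero hj, map_zero, mul_zero, zero_mul]
    · rw [hξ.inner_eq_zero hi, map_zero, AddMonoidHom.zero_apply, mul_zero, zero_mul]
  isIdempotentElem_inner_self := fun ⟨i, j⟩ => by
    rw [IsIdempotentElem, inner_tensorBasis_self hξ hη hΦmul hΦstar htmul, ← hΦmul,
      (hξ.isIdempotentElem_inner_self i).eq, (hη.isIdempotentElem_inner_self j).eq]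
  eq_sum_op_smul_inner := eq_sum_op_smul_inner_of_dense hdense _ <| by
    rintro _ ⟨⟨x, y, a⟩, rfl⟩ _ ⟨⟨x', y', a'⟩, rfl⟩
    exact sum_inner_tmul_tensorBasis_mul hξ hη hΦmul hΦstar htmul x y a x' y' a'

end TensorBasis

end OldCStarModule

theorem stmt7_general {B : Type*} [NonUnitalCStarAlgebra B] [PartialOrder B]
    {A : Type*} [NonUnitalCStarAlgebra A] [PartialOrder A] [StarOrderedRing A]
    {M : Type*} [NormedAddCommGroup M] [Module ℂ M] [SMul Bᵐᵒᵖ M] [OldCStarModule B M]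
    {N : Type*} [NormedAddCommGroup N] [Module ℂ N] [SMul Bᵐᵒᵖ N] [OldCStarModule B N]
    -- the *-homomorphism `Φ : B ⊗ B → A` via its values on elementary tensors
    (Φ : B → B → A)
    (hΦadd₁ : ∀ a a' b, Φ (a + a') b = Φ a b + Φ a' b)
    (hΦadd₂ : ∀ a b b', Φ a (b + b') = Φ a b + Φ a b')
    (hΦmul : ∀ a a' b b', Φ (a * a') (b * b') = Φ a b * Φ a' b')
    (hΦstar : ∀ a b, Φ (star a) (star b) = star (Φ a b))
    -- the interior tensor product `T = (M ⊠ N) ⊗_Φ A`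
    {T : Type*} [NormedAddCommGroup T] [Module ℂ T] [SMul Aᵐᵒᵖ T] [OldCStarModule A T]
    (ι : M → N → A → T)
    (hι_inner : ∀ (x : M) (y : N) (a : A) (x' : M) (y' : N) (a' : A),
      ⟪ι x y a, ι x' y' a'⟫_A = star a * Φ ⟪x, x'⟫_B ⟪y, y'⟫_B * a')
    (hι_dense : Dense (↑(Submodule.span ℂ
      (Set.range fun p : M × N × A => ι p.1 p.2.1 p.2.2)) : Set T))
    -- the finite orthonormal bases of `M` and `N`
    (n m : ℕ) (ξ : Fin n → M) (η : Fin m → N)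
    (hξorth : ∀ i i', i ≠ i' → ⟪ξ i, ξ i'⟫_B = 0)
    (hξproj : ∀ i, IsIdempotentElem ⟪ξ i, ξ i⟫_B ∧ IsSelfAdjoint ⟪ξ i, ξ i⟫_B)
    (hξexp : ∀ x : M, x = ∑ i, ξ i <• ⟪ξ i, x⟫_B)
    (hηorth : ∀ j j', j ≠ j' → ⟪η j, η j'⟫_B = 0)
    (hηproj : ∀ j, IsIdempotentElem ⟪η j, η j⟫_B ∧ IsSelfAdjoint ⟪η j, η j⟫_B)
    (hηexp : ∀ y : N, y = ∑ j, η j <• ⟪η j, y⟫_B) :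
    ∀ ζ : Fin n → Fin m → T,
      (∀ i j, ζ i j = ι (ξ i) (η j) (Φ ⟪ξ i, ξ i⟫_B ⟪η j, η j⟫_B)) →
      (∀ i j i' j', (i, j) ≠ (i', j') → ⟪ζ i j, ζ i' j'⟫_A = 0) ∧
      (∀ i j, IsIdempotentElem ⟪ζ i j, ζ i j⟫_A ∧ IsSelfAdjoint ⟪ζ i j, ζ i j⟫_A) ∧
      (∀ t : T, t = ∑ i, ∑ j, ζ i j <• ⟪ζ i j, t⟫_A) := by
  intro ζ hζ
  let Φ' : B →+ B →+ A := AddMonoidHom.mk' (fun a => AddMonoidHom.mk' (Φ a) (hΦadd₂ a))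
    fun a a' => AddMonoidHom.ext (hΦadd₁ a a')
  obtain rfl : ζ = OldCStarModule.tensorBasis Φ' ι ξ η := funext₂ hζ
  have hξ : OldCStarModule.IsOrthonormalBasis ξ := ⟨hξorth, fun i => (hξproj i).1, hξexp⟩
  have hη : OldCStarModule.IsOrthonormalBasis η := ⟨hηorth, fun j => (hηproj j).1, hηexp⟩
  have hζ := hξ.tensorBasis hη (Φ := Φ') hΦmul hΦstar hι_inner hι_dense
  refine ⟨fun i j i' j' hne => hζ.inner_eq_zero hne,
    fun i j => ⟨hζ.isIdempotentElem_inner_self (i, j), OldCStarModule.isSelfAdjoint_inner_self⟩,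
    fun t => ?_⟩
  rw [← Fintype.sum_prod_type']
  exact hζ.eq_sum_op_smul_inner t

/-- Let `M`, `N` be right Hilbert `B`-modules with finite orthonormal bases
`(ξ i)` and `(η j)`, `A` a C*-algebra and `Φ : B ⊗ B → A` a *-homomorphism on the minimal
tensor product (encoded by its values `Φ a b` on elementary tensors: bilinear, multiplicative
and star-preserving).  Let `T = (M ⊠ N) ⊗_Φ A` be the interior tensor product of the exterior
tensor product along `Φ` (encoded by the map `ι` to simple tensors, satisfying the defining
inner-product formula, module compatibilities, and density of the span of simple tensors).
Then the elements `ζ i j = ι (ξ i) (η j) (Φ ⟪ξ i, ξ i⟫ ⟪η j, η j⟫)` form a finite orthonormal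
basis of `T`: they are mutually orthogonal, each `⟪ζ i j, ζ i j⟫` is a projection in `A`, and
every `t : T` has the Fourier expansion `t = ∑ ζ i j <• ⟪ζ i j, t⟫`. -/
theorem stmt7 {B : Type*} [NonUnitalCStarAlgebra B] [PartialOrder B] [StarOrderedRing B]
    {A : Type*} [NonUnitalCStarAlgebra A] [PartialOrder A] [StarOrderedRing A]
    {M : Type*} [NormedAddCommGroup M] [Module ℂ M] [SMul Bᵐᵒᵖ M] [OldCStarModule B M]
    [CompleteSpace M]
    {N : Type*} [NormedAddCommGroup N] [Module ℂ N] [SMul Bᵐᵒᵖ N] [OldCStarModule B N]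
    [CompleteSpace N]
    -- the *-homomorphism `Φ : B ⊗ B → A` via its values on elementary tensors
    (Φ : B → B → A)
    (hΦadd₁ : ∀ a a' b, Φ (a + a') b = Φ a b + Φ a' b)
    (hΦadd₂ : ∀ a b b', Φ a (b + b') = Φ a b + Φ a b')
    (hΦsmul : ∀ (c : ℂ) a b, Φ (c • a) b = c • Φ a b)
    (hΦmul : ∀ a a' b b', Φ (a * a') (b * b') = Φ a b * Φ a' b')
    (hΦstar : ∀ a b, Φ (star a) (star b) = star (Φ a b))
    -- the interior tensor product `T = (M ⊠ N) ⊗_Φ A`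
    {T : Type*} [NormedAddCommGroup T] [Module ℂ T] [SMul Aᵐᵒᵖ T] [OldCStarModule A T]
    [CompleteSpace T]
    (ι : M → N → A → T)
    (hι_inner : ∀ (x : M) (y : N) (a : A) (x' : M) (y' : N) (a' : A),
      ⟪ι x y a, ι x' y' a'⟫_A = star a * Φ ⟪x, x'⟫_B ⟪y, y'⟫_B * a')
    (hι_smul : ∀ (x : M) (y : N) (a b : A), (ι x y a) <• b = ι x y (a * b))
    (hι_add₁ : ∀ (x x' : M) (y : N) (a : A), ι (x + x') y a = ι x y a + ι x' y a)
    (hι_add₂ : ∀ (x : M) (y y' : N) (a : A), ι x (y + y') a = ι x y a + ι x y' a)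
    (hι_add₃ : ∀ (x : M) (y : N) (a a' : A), ι x y (a + a') = ι x y a + ι x y a')
    (hι_dense : Dense (↑(Submodule.span ℂ
      (Set.range fun p : M × N × A => ι p.1 p.2.1 p.2.2)) : Set T))
    -- the finite orthonormal bases of `M` and `N`
    (n m : ℕ) (ξ : Fin n → M) (η : Fin m → N)
    (hξorth : ∀ i i', i ≠ i' → ⟪ξ i, ξ i'⟫_B = 0)
    (hξproj : ∀ i, IsIdempotentElem ⟪ξ i, ξ i⟫_B ∧ IsSelfAdjoint ⟪ξ i, ξ i⟫_B)
    (hξexp : ∀ x : M, x = ∑ i, ξ i <• ⟪ξ i, x⟫_B)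
    (hηorth : ∀ j j', j ≠ j' → ⟪η j, η j'⟫_B = 0)
    (hηproj : ∀ j, IsIdempotentElem ⟪η j, η j⟫_B ∧ IsSelfAdjoint ⟪η j, η j⟫_B)
    (hηexp : ∀ y : N, y = ∑ j, η j <• ⟪η j, y⟫_B) :
    ∀ ζ : Fin n → Fin m → T,
      (∀ i j, ζ i j = ι (ξ i) (η j) (Φ ⟪ξ i, ξ i⟫_B ⟪η j, η j⟫_B)) →
      (∀ i j i' j', (i, j) ≠ (i', j') → ⟪ζ i j, ζ i' j'⟫_A = 0) ∧
      (∀ i j, IsIdempotentElem ⟪ζ i j, ζ i j⟫_A ∧ IsSelfAdjoint ⟪ζ i j, ζ i j⟫_A) ∧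
      (∀ t : T, t = ∑ i, ∑ j, ζ i j <• ⟪ζ i j, t⟫_A) :=
  stmt7_general Φ hΦadd₁ hΦadd₂ hΦmul hΦstar ι hι_inner hι_dense n m ξ η hξorth hξproj hξexp hηorth
    hηproj hηexp
end

section
/- Let B be a C*-algebra, Φ : B ⊗ B → B a *-homomorphism, and V a unitary (in the multiplier algebra of B, or in B(H) for a faithful nondegenerate representation of B) satisfying V Φ(Φ(b₁ ⊗ b₂) ⊗ b₃) V* = Φ(b₁ ⊗ Φ(b₂ ⊗ b₃)) for all b₁, b₂, b₃ ∈ B. Then for right Hilbert B-modules M₁, M₂, M₃, the formula α(((ξ₁⊠ξ₂)⊗c ⊠ ξ₃)⊗e) = (ξ₁ ⊠ ((ξ₂⊠ξ₃)⊗1)) ⊗ VΦ(c⊗1)e extends (via the appropriate balancing relations) to a well-defined B-linear isometry (M₁⊗M₂)⊗M₃ → M₁⊗(M₂⊗M₃), where M⊗N := (M⊠N)⊗_Φ B. -/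
open scoped InnerProductSpace RightActions

/-- The Hilbert C⋆-module class as it stood in Mathlib of December 2024 (right `A`-module via
`SMul Aᵐᵒᵖ E`, inner product `A`-linear on the right). -/
class CStarModuleRight (A E : Type*) [NonUnitalSemiring A] [StarRing A] [Module ℂ A]
    [AddCommGroup E] [Module ℂ E] [PartialOrder A] [SMul Aᵐᵒᵖ E] [Norm A] [Norm E]
    extends Inner A E where
  inner_add_right {x} {y} {z} : inner x (y + z) = inner x y + inner x z
  inner_self_nonneg {x} : 0 ≤ inner x x
  inner_self {x} : inner x x = 0 ↔ x = 0
  inner_op_smul_right {a : A} {x y : E} : inner x (y <• a) = inner x y * a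
  inner_smul_right_complex {z : ℂ} {x} {y} : inner x (z • y) = z • inner x y
  star_inner x y : star (inner x y) = inner y x
  norm_eq_sqrt_norm_inner_self x : ‖x‖ = Real.sqrt ‖inner x x‖

/-!
On elementary tensors the two `B`-valued inner products agree: multiplicativity of `Φ` turns
`Φ(c* Φ(P ⊗ Q) c' ⊗ R)` into `Φ(c ⊗ 1)* Φ(Φ(P ⊗ Q) ⊗ R) Φ(c' ⊗ 1)`, and the intertwining identity
rewrites the middle factor as `V* Φ(P ⊗ Φ(Q ⊗ R)) V`. A map prescribed on a family with dense
span that preserves inner products is well defined and isometric on the span, since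
`‖x‖² = ‖⟪x, x⟫‖`, so it extends by continuity. Finally, any map between Hilbert modules that
preserves inner products is `B`-linear: `⟪α(t b) - α(t) b, α(t b) - α(t) b⟫` expands to `0`.
-/

namespace CStarModuleRight

open MulOpposite

attribute [simp] inner_add_right inner_op_smul_right inner_smul_right_complex star_inner

section Algebra

variable {A : Type*} [NonUnitalRing A] [StarRing A] [Module ℂ A] [PartialOrder A] [Norm A]
  {E : Type*} [AddCommGroup E] [Module ℂ E] [SMul Aᵐᵒᵖ E] [Norm E] [CStarModuleRight A E]

@[simp] lemma inner_add_left {x y z : E} : ⟪x + y, z⟫_A = ⟪x, z⟫_A + ⟪y, z⟫_A := by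
  rw [← star_inner z, inner_add_right, star_add, star_inner, star_inner]

@[simp] lemma inner_op_smul_left {a : A} {x y : E} : ⟪x <• a, y⟫_A = star a * ⟪x, y⟫_A := by
  rw [← star_inner y, inner_op_smul_right, star_mul, star_inner]

@[simp] lemma inner_smul_left_complex [StarModule ℂ A] {z : ℂ} {x y : E} :
    ⟪z • x, y⟫_A = star z • ⟪x, y⟫_A := by
  rw [← star_inner y, inner_smul_right_complex, star_smul, star_inner]

@[simp] lemma inner_zero_right {x : E} : ⟪x, 0⟫_A = 0 := by
  simpa using inner_add_right (A := A) (x := x) (y := 0) (z := 0)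

@[simp] lemma inner_zero_left {x : E} : ⟪0, x⟫_A = 0 := by
  rw [← star_inner x, inner_zero_right, star_zero]

@[simp] lemma inner_sub_right {x y z : E} : ⟪x, y - z⟫_A = ⟪x, y⟫_A - ⟪x, z⟫_A := by
  rw [eq_sub_iff_add_eq, ← inner_add_right, sub_add_cancel]

@[simp] lemma inner_sub_left {x y z : E} : ⟪x - y, z⟫_A = ⟪x, z⟫_A - ⟪y, z⟫_A := by
  rw [eq_sub_iff_add_eq, ← inner_add_left, sub_add_cancel]

variable {F : Type*} [AddCommGroup F] [Module ℂ F] [SMul Aᵐᵒᵖ F] [Norm F] [CStarModuleRight A F]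

theorem map_op_smul_of_inner_map_map {f : E → F} (hf : ∀ x y, ⟪f x, f y⟫_A = ⟪x, y⟫_A)
    (x : E) (a : A) : f (x <• a) = f x <• a := by
  rw [← sub_eq_zero, ← inner_self (A := A)]
  simp [hf, mul_assoc]

theorem inner_linearCombination_eq [StarModule ℂ A] {G : Type*} {g : G → E} {h : G → F}
    (hgh : ∀ p q, ⟪h p, h q⟫_A = ⟪g p, g q⟫_A) (u v : G →₀ ℂ) :
    ⟪Finsupp.linearCombination ℂ h u, Finsupp.linearCombination ℂ h v⟫_A =
      ⟪Finsupp.linearCombination ℂ g u, Finsupp.linearCombination ℂ g v⟫_A := by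
  induction u using Finsupp.induction_linear with
  | zero => simp
  | add u u' hu hu' => simp [hu, hu']
  | single p k =>
    induction v using Finsupp.induction_linear with
    | zero => simp
    | add v v' hv hv' => rw [map_add, map_add, inner_add_right, inner_add_right, hv, hv']
    | single q k' => simp [hgh]

end Algebra

section Analysis

variable {A : Type*} [NonUnitalCStarAlgebra A] [PartialOrder A] [StarOrderedRing A]
  {E : Type*} [NormedAddCommGroup E] [Module ℂ E] [SMul Aᵐᵒᵖ E] [CStarModuleRight A E]

/-- Mathlib's `CStarModule` is a left module whose inner product is linear in the acting scalars;
a right Hilbert `A`-module is one over `Aᵐᵒᵖ` with inner product `op ⟪x, y⟫_A`. -/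
instance instCStarModuleMulOpposite : CStarModule Aᵐᵒᵖ E where
  inner x y := op ⟪x, y⟫_A
  inner_add_right := by simp
  inner_self_nonneg := inner_self_nonneg (A := A)
  inner_self := by simp [inner_self]
  inner_op_smul_right {a x y} := by
    simpa using congrArg op (inner_op_smul_right (a := unop a) (x := x) (y := y))
  inner_smul_right_complex := by simp
  star_inner x y := congrArg op (star_inner x y)
  norm_eq_sqrt_norm_inner_self x := norm_eq_sqrt_norm_inner_self (A := A) x

theorem continuous_inner : Continuous fun x : E × E => ⟪x.1, x.2⟫_A :=
  letI : NormedSpace ℂ E := .ofCore (CStarModule.normedSpaceCore Aᵐᵒᵖ)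
  continuous_unop.comp (CStarModule.continuous_inner (A := Aᵐᵒᵖ) (E := E))

variable {F : Type*} [NormedAddCommGroup F] [Module ℂ F] [SMul Aᵐᵒᵖ F] [CStarModuleRight A F]
  [CompleteSpace F]

theorem exists_linearMap_inner_map_map {G : Type*} {g : G → E} {h : G → F}
    (hg : Dense (Submodule.span ℂ (Set.range g) : Set E))
    (hgh : ∀ p q, ⟪h p, h q⟫_A = ⟪g p, g q⟫_A) :
    ∃ α : E →ₗ[ℂ] F, (∀ p, α (g p) = h p) ∧ ∀ x y, ⟪α x, α y⟫_A = ⟪x, y⟫_A := by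
  let : NormedSpace ℂ E := .ofCore (CStarModule.normedSpaceCore Aᵐᵒᵖ)
  let : NormedSpace ℂ F := .ofCore (CStarModule.normedSpaceCore Aᵐᵒᵖ)
  set Lg := Finsupp.linearCombination ℂ g
  set Lh := Finsupp.linearCombination ℂ h
  have hL := inner_linearCombination_eq hgh
  have hdense : DenseRange Lg := by
    rwa [DenseRange, ← LinearMap.coe_range, Finsupp.range_linearCombination]
  have hnorm : ∀ u, ‖Lh u‖ ≤ 1 * ‖Lg u‖ := fun u => by
    rw [one_mul, norm_eq_sqrt_norm_inner_self (A := A),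
      norm_eq_sqrt_norm_inner_self (A := A) (Lg u), hL]
  have hα := LinearMap.extendOfNorm_eq hdense ⟨1, hnorm⟩
  set α := Lh.extendOfNorm Lg
  refine ⟨α.toLinearMap, fun p => by simpa [Lg, Lh] using hα (Finsupp.single p 1), ?_⟩
  refine hdense.induction_on₂ ?_ fun u v => by simpa [hα] using hL u v
  exact isClosed_eq (continuous_inner.comp (α.continuous.prodMap α.continuous)) continuous_inner

end Analysis

end CStarModuleRight

theorem apply_conj_apply_eq_unitary_conj {B : Type*} [Monoid B] [StarMul B] {Φ : B → B → B}
    (hΦmul : ∀ a a' b b', Φ (a * a') (b * b') = Φ a b * Φ a' b')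
    (hΦstar : ∀ a b, Φ (star a) (star b) = star (Φ a b))
    {V : B} (hV : V ∈ unitary B) (hVΦ : ∀ b₁ b₂ b₃, V * Φ (Φ b₁ b₂) b₃ * star V = Φ b₁ (Φ b₂ b₃))
    (P Q R c c' : B) :
    Φ (star c * Φ P Q * c') R = star (V * Φ c 1) * Φ P (Φ Q R) * (V * Φ c' 1) := by
  have hΦstar_one : Φ (star c) 1 = star (Φ c 1) := by simpa using hΦstar c 1
  calc Φ (star c * Φ P Q * c') R = Φ (star c) 1 * Φ (Φ P Q) R * Φ c' 1 := by
        rw [← hΦmul, ← hΦmul, one_mul, mul_one]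
    _ = star (Φ c 1) * (star V * V * Φ (Φ P Q) R * (star V * V)) * Φ c' 1 := by
        rw [hΦstar_one, Unitary.star_mul_self_of_mem hV, one_mul, mul_one]
    _ = star (V * Φ c 1) * (V * Φ (Φ P Q) R * star V) * (V * Φ c' 1) := by
        simp only [star_mul, mul_assoc]
    _ = star (V * Φ c 1) * Φ P (Φ Q R) * (V * Φ c' 1) := by rw [hVΦ]

theorem stmt11_general {B : Type*} [CStarAlgebra B] [PartialOrder B] [StarOrderedRing B]
    (Φ : B → B → B)
    (hΦmul : ∀ a a' b b', Φ (a * a') (b * b') = Φ a b * Φ a' b')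
    (hΦstar : ∀ a b, Φ (star a) (star b) = star (Φ a b))
    (V : B) (hV : V ∈ unitary B)
    (hVΦ : ∀ b₁ b₂ b₃ : B, V * Φ (Φ b₁ b₂) b₃ * star V = Φ b₁ (Φ b₂ b₃))
    {M₁ : Type*} [NormedAddCommGroup M₁] [Module ℂ M₁] [SMul Bᵐᵒᵖ M₁] [CStarModuleRight B M₁]
    {M₂ : Type*} [NormedAddCommGroup M₂] [Module ℂ M₂] [SMul Bᵐᵒᵖ M₂] [CStarModuleRight B M₂]
    {M₃ : Type*} [NormedAddCommGroup M₃] [Module ℂ M₃] [SMul Bᵐᵒᵖ M₃] [CStarModuleRight B M₃]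
    -- `T₁₂ = M₁ ⊗ M₂`
    {T₁₂ : Type*} [NormedAddCommGroup T₁₂] [Module ℂ T₁₂] [SMul Bᵐᵒᵖ T₁₂] [CStarModuleRight B T₁₂]
    (ι₁₂ : M₁ → M₂ → B → T₁₂)
    (hι₁₂_inner : ∀ (x : M₁) (y : M₂) (a : B) (x' : M₁) (y' : M₂) (a' : B),
      ⟪ι₁₂ x y a, ι₁₂ x' y' a'⟫_B = star a * Φ ⟪x, x'⟫_B ⟪y, y'⟫_B * a')
    -- `T₂₃ = M₂ ⊗ M₃`
    {T₂₃ : Type*} [NormedAddCommGroup T₂₃] [Module ℂ T₂₃] [SMul Bᵐᵒᵖ T₂₃] [CStarModuleRight B T₂₃]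
    (ι₂₃ : M₂ → M₃ → B → T₂₃)
    (hι₂₃_inner : ∀ (y : M₂) (z : M₃) (a : B) (y' : M₂) (z' : M₃) (a' : B),
      ⟪ι₂₃ y z a, ι₂₃ y' z' a'⟫_B = star a * Φ ⟪y, y'⟫_B ⟪z, z'⟫_B * a')
    -- `TL = (M₁ ⊗ M₂) ⊗ M₃`
    {TL : Type*} [NormedAddCommGroup TL] [Module ℂ TL] [SMul Bᵐᵒᵖ TL] [CStarModuleRight B TL]
    (ιL : T₁₂ → M₃ → B → TL)
    (hιL_inner : ∀ (x : T₁₂) (z : M₃) (e : B) (x' : T₁₂) (z' : M₃) (e' : B),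
      ⟪ιL x z e, ιL x' z' e'⟫_B = star e * Φ ⟪x, x'⟫_B ⟪z, z'⟫_B * e')
    (hιL_dense : Dense (↑(Submodule.span ℂ
      {t : TL | ∃ (x : M₁) (y : M₂) (c : B) (z : M₃) (e : B),
        t = ιL (ι₁₂ x y c) z e}) : Set TL))
    -- `TR = M₁ ⊗ (M₂ ⊗ M₃)`
    {TR : Type*} [NormedAddCommGroup TR] [Module ℂ TR] [SMul Bᵐᵒᵖ TR] [CStarModuleRight B TR]
    [CompleteSpace TR]
    (ιR : M₁ → T₂₃ → B → TR)
    (hιR_inner : ∀ (x : M₁) (w : T₂₃) (e : B) (x' : M₁) (w' : T₂₃) (e' : B),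
      ⟪ιR x w e, ιR x' w' e'⟫_B = star e * Φ ⟪x, x'⟫_B ⟪w, w'⟫_B * e') :
    ∃ α : TL → TR,
      (∀ (x : M₁) (y : M₂) (z : M₃) (c e : B),
        α (ιL (ι₁₂ x y c) z e) = ιR x (ι₂₃ y z 1) (V * Φ c 1 * e)) ∧
      (∀ t t' : TL, α (t + t') = α t + α t') ∧
      (∀ (k : ℂ) (t : TL), α (k • t) = k • α t) ∧
      (∀ (t : TL) (b : B), α (t <• b) = (α t) <• b) ∧
      (∀ t t' : TL, ⟪α t, α t'⟫_B = ⟪t, t'⟫_B) := by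
  let g : M₁ × M₂ × B × M₃ × B → TL := fun ⟨x, y, c, z, e⟩ => ιL (ι₁₂ x y c) z e
  let h : M₁ × M₂ × B × M₃ × B → TR := fun ⟨x, y, c, z, e⟩ => ιR x (ι₂₃ y z 1) (V * Φ c 1 * e)
  have hgh : ∀ p q, ⟪h p, h q⟫_B = ⟪g p, g q⟫_B := by
    rintro ⟨x, y, c, z, e⟩ ⟨x', y', c', z', e'⟩
    simp only [g, h, hιR_inner, hι₂₃_inner, hιL_inner, hι₁₂_inner,
      apply_conj_apply_eq_unitary_conj hΦmul hΦstar hV hVΦ]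
    simp only [star_one, one_mul, mul_one, star_mul, mul_assoc]
  have hg : Dense (Submodule.span ℂ (Set.range g) : Set TL) := by
    convert hιL_dense using 4
    ext t
    simp [g, eq_comm]
  obtain ⟨α, hαg, hα⟩ := CStarModuleRight.exists_linearMap_inner_map_map hg hgh
  exact ⟨α, fun x y z c e => hαg (x, y, c, z, e), map_add α, map_smul α,
    CStarModuleRight.map_op_smul_of_inner_map_map hα, hα⟩

/-- Let `B` be a (unital) C*-algebra (so that `B` coincides with its
multiplier algebra), `Φ : B ⊗ B → B` a *-homomorphism on the minimal tensor product (encoded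
on elementary tensors), and `V` a unitary satisfying
`V Φ(Φ(b₁ ⊗ b₂) ⊗ b₃) V* = Φ(b₁ ⊗ Φ(b₂ ⊗ b₃))` for all `b₁, b₂, b₃ ∈ B`.  Then for right
Hilbert `B`-modules `M₁, M₂, M₃` the formula
`α(((ξ₁ ⊠ ξ₂) ⊗ c ⊠ ξ₃) ⊗ e) = (ξ₁ ⊠ ((ξ₂ ⊠ ξ₃) ⊗ 1)) ⊗ V Φ(c ⊗ 1) e`
extends to a well-defined `B`-linear isometry `(M₁ ⊗ M₂) ⊗ M₃ → M₁ ⊗ (M₂ ⊗ M₃)`, where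
`M ⊗ N := (M ⊠ N) ⊗_Φ B` (all tensor products encoded by simple tensor maps with the
defining inner-product formulas and dense spans). -/
theorem stmt11 {B : Type*} [CStarAlgebra B] [PartialOrder B] [StarOrderedRing B]
    (Φ : B → B → B)
    (hΦadd₁ : ∀ a a' b, Φ (a + a') b = Φ a b + Φ a' b)
    (hΦadd₂ : ∀ a b b', Φ a (b + b') = Φ a b + Φ a b')
    (hΦsmul : ∀ (c : ℂ) a b, Φ (c • a) b = c • Φ a b)
    (hΦmul : ∀ a a' b b', Φ (a * a') (b * b') = Φ a b * Φ a' b')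
    (hΦstar : ∀ a b, Φ (star a) (star b) = star (Φ a b))
    (V : B) (hV : V ∈ unitary B)
    (hVΦ : ∀ b₁ b₂ b₃ : B, V * Φ (Φ b₁ b₂) b₃ * star V = Φ b₁ (Φ b₂ b₃))
    {M₁ : Type*} [NormedAddCommGroup M₁] [Module ℂ M₁] [SMul Bᵐᵒᵖ M₁] [CStarModuleRight B M₁]
    [CompleteSpace M₁]
    {M₂ : Type*} [NormedAddCommGroup M₂] [Module ℂ M₂] [SMul Bᵐᵒᵖ M₂] [CStarModuleRight B M₂]
    [CompleteSpace M₂]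
    {M₃ : Type*} [NormedAddCommGroup M₃] [Module ℂ M₃] [SMul Bᵐᵒᵖ M₃] [CStarModuleRight B M₃]
    [CompleteSpace M₃]
    -- `T₁₂ = M₁ ⊗ M₂`
    {T₁₂ : Type*} [NormedAddCommGroup T₁₂] [Module ℂ T₁₂] [SMul Bᵐᵒᵖ T₁₂] [CStarModuleRight B T₁₂]
    [CompleteSpace T₁₂]
    (ι₁₂ : M₁ → M₂ → B → T₁₂)
    (hι₁₂_inner : ∀ (x : M₁) (y : M₂) (a : B) (x' : M₁) (y' : M₂) (a' : B),
      ⟪ι₁₂ x y a, ι₁₂ x' y' a'⟫_B = star a * Φ ⟪x, x'⟫_B ⟪y, y'⟫_B * a')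
    (hι₁₂_smul : ∀ (x : M₁) (y : M₂) (a b : B), (ι₁₂ x y a) <• b = ι₁₂ x y (a * b))
    (hι₁₂_dense : Dense (↑(Submodule.span ℂ
      (Set.range fun t : M₁ × M₂ × B => ι₁₂ t.1 t.2.1 t.2.2)) : Set T₁₂))
    -- `T₂₃ = M₂ ⊗ M₃`
    {T₂₃ : Type*} [NormedAddCommGroup T₂₃] [Module ℂ T₂₃] [SMul Bᵐᵒᵖ T₂₃] [CStarModuleRight B T₂₃]
    [CompleteSpace T₂₃]
    (ι₂₃ : M₂ → M₃ → B → T₂₃)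
    (hι₂₃_inner : ∀ (y : M₂) (z : M₃) (a : B) (y' : M₂) (z' : M₃) (a' : B),
      ⟪ι₂₃ y z a, ι₂₃ y' z' a'⟫_B = star a * Φ ⟪y, y'⟫_B ⟪z, z'⟫_B * a')
    (hι₂₃_smul : ∀ (y : M₂) (z : M₃) (a b : B), (ι₂₃ y z a) <• b = ι₂₃ y z (a * b))
    (hι₂₃_dense : Dense (↑(Submodule.span ℂ
      (Set.range fun t : M₂ × M₃ × B => ι₂₃ t.1 t.2.1 t.2.2)) : Set T₂₃))
    -- `TL = (M₁ ⊗ M₂) ⊗ M₃`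
    {TL : Type*} [NormedAddCommGroup TL] [Module ℂ TL] [SMul Bᵐᵒᵖ TL] [CStarModuleRight B TL]
    [CompleteSpace TL]
    (ιL : T₁₂ → M₃ → B → TL)
    (hιL_inner : ∀ (x : T₁₂) (z : M₃) (e : B) (x' : T₁₂) (z' : M₃) (e' : B),
      ⟪ιL x z e, ιL x' z' e'⟫_B = star e * Φ ⟪x, x'⟫_B ⟪z, z'⟫_B * e')
    (hιL_smul : ∀ (x : T₁₂) (z : M₃) (e b : B), (ιL x z e) <• b = ιL x z (e * b))
    (hιL_dense : Dense (↑(Submodule.span ℂ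
      {t : TL | ∃ (x : M₁) (y : M₂) (c : B) (z : M₃) (e : B),
        t = ιL (ι₁₂ x y c) z e}) : Set TL))
    -- `TR = M₁ ⊗ (M₂ ⊗ M₃)`
    {TR : Type*} [NormedAddCommGroup TR] [Module ℂ TR] [SMul Bᵐᵒᵖ TR] [CStarModuleRight B TR]
    [CompleteSpace TR]
    (ιR : M₁ → T₂₃ → B → TR)
    (hιR_inner : ∀ (x : M₁) (w : T₂₃) (e : B) (x' : M₁) (w' : T₂₃) (e' : B),
      ⟪ιR x w e, ιR x' w' e'⟫_B = star e * Φ ⟪x, x'⟫_B ⟪w, w'⟫_B * e')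
    (hιR_smul : ∀ (x : M₁) (w : T₂₃) (e b : B), (ιR x w e) <• b = ιR x w (e * b)) :
    ∃ α : TL → TR,
      (∀ (x : M₁) (y : M₂) (z : M₃) (c e : B),
        α (ιL (ι₁₂ x y c) z e) = ιR x (ι₂₃ y z 1) (V * Φ c 1 * e)) ∧
      (∀ t t' : TL, α (t + t') = α t + α t') ∧
      (∀ (k : ℂ) (t : TL), α (k • t) = k • α t) ∧
      (∀ (t : TL) (b : B), α (t <• b) = (α t) <• b) ∧
      (∀ t t' : TL, ⟪α t, α t'⟫_B = ⟪t, t'⟫_B) :=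
  stmt11_general Φ hΦmul hΦstar V hV hVΦ ι₁₂ hι₁₂_inner ι₂₃ hι₂₃_inner ιL hιL_inner hιL_dense ιR
    hιR_inner
end
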